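/- Fix N, M ∈ ℕ and let 𝓡 be a set of rules such that every rule r = ⟨L ← K → R⟩ ∈ 𝓡 satisfies (a) deg_R(v) ≤ N for all v ∈ V_R ∖ V_K and deg_R(v) ≤ deg_L(v) for all v ∈ V_K, and (b) |p_R⁻¹({1})| ≤ |p_L⁻¹({1})|. Then for all TLRGs G, H with G ⇒_𝓡 H: if every node of G has degree at most N, then every node of H has degree at most N; and if G has at most M root nodes, then H has at most M root nodes. -/

import Mathlib

/-! # Rooted graph transformation with relabelling -/

/-- A graph over a label alphabet `(LV, LE)`: finite vertex and edge sets, total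
source/target functions, a partial node-labelling function `l`, a total
edge-labelling function `m`, and a partial rootedness function `p`
(`some true` = root node, `some false` = non-root, `none` = undefined). -/
structure GTGraph (LV LE : Type) : Type 1 where
  V : Type
  E : Type
  finV : Finite V
  finE : Finite E
  s : E → V
  t : E → V
  l : V → Option LV
  m : E → LE
  p : V → Option Bool

namespace GTGraph

variable {LV LE : Type}

def IsTotallyLabelled (G : GTGraph LV LE) : Prop := ∀ v, (G.l v).isSome
def IsTotallyRooted (G : GTGraph LV LE) : Prop := ∀ v, (G.p v).isSome
/-- totally labelled, totally rooted graph -/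
def IsTLRG (G : GTGraph LV LE) : Prop := G.IsTotallyLabelled ∧ G.IsTotallyRooted

/-- The number of root nodes `|p⁻¹({1})|`. -/
noncomputable def rootCount (G : GTGraph LV LE) : ℕ := Nat.card {v : G.V // G.p v = some true}

/-- The degree of a node. -/
noncomputable def degree (G : GTGraph LV LE) (v : G.V) : ℕ :=
  Nat.card {e : G.E // G.s e = v} + Nat.card {e : G.E // G.t e = v}

end GTGraph

/-- GTGraph morphisms preserve sources, targets, edge labels, and node labels and
rootedness wherever these are defined. -/
structure Morphism {LV LE : Type} (G H : GTGraph LV LE) : Type where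
  fV : G.V → H.V
  fE : G.E → H.E
  src : ∀ e, fV (G.s e) = H.s (fE e)
  tgt : ∀ e, fV (G.t e) = H.t (fE e)
  edgeLabel : ∀ e, G.m e = H.m (fE e)
  nodeLabel : ∀ v x, G.l v = some x → H.l (fV v) = some x
  rootedness : ∀ v b, G.p v = some b → H.p (fV v) = some b

namespace Morphism

variable {LV LE : Type} {G H K : GTGraph LV LE}

def Injective (g : Morphism G H) : Prop := Function.Injective g.fV ∧ Function.Injective g.fE

/-- identity morphism -/
def ident (G : GTGraph LV LE) : Morphism G G where
  fV := id
  fE := id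
  src := fun _ => rfl
  tgt := fun _ => rfl
  edgeLabel := fun _ => rfl
  nodeLabel := fun _ _ h => h
  rootedness := fun _ _ h => h

/-- composition of morphisms -/
def comp (g : Morphism G H) (h : Morphism H K) : Morphism G K where
  fV := h.fV ∘ g.fV
  fE := h.fE ∘ g.fE
  src := fun e => by simp [Function.comp, g.src e, h.src (g.fE e)]
  tgt := fun e => by simp [Function.comp, g.tgt e, h.tgt (g.fE e)]
  edgeLabel := fun e => by simp [Function.comp, ← h.edgeLabel (g.fE e), g.edgeLabel e]
  nodeLabel := fun v x hx => h.nodeLabel _ _ (g.nodeLabel v x hx)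
  rootedness := fun v b hb => h.rootedness _ _ (g.rootedness v b hb)

end Morphism

/-- An isomorphism of graphs: a morphism with a two-sided inverse morphism. -/
structure Iso {LV LE : Type} (G H : GTGraph LV LE) : Type where
  toMor : Morphism G H
  invMor : Morphism H G
  leftV : ∀ v, invMor.fV (toMor.fV v) = v
  leftE : ∀ e, invMor.fE (toMor.fE e) = e
  rightV : ∀ v, toMor.fV (invMor.fV v) = v
  rightE : ∀ e, toMor.fE (invMor.fE e) = e

/-- A rule `⟨L ← K → R⟩`: graphs `L`, `K`, `R` together with inclusion
(injective) morphisms `K ↪ L` and `K ↪ R`.  (In the rooted relabelling setting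
`L` and `R` are additionally required to be TLRGs; this requirement is stated
as a hypothesis where needed.) -/
structure Rule (LV LE : Type) : Type 1 where
  L : GTGraph LV LE
  K : GTGraph LV LE
  R : GTGraph LV LE
  incL : Morphism K L
  incR : Morphism K R
  injL : incL.Injective
  injR : incR.Injective

namespace Rule

variable {LV LE : Type} (r : Rule LV LE) (G : GTGraph LV LE)

/-- The inverse rule `r⁻¹ = ⟨R ← K → L⟩`. -/
def inv (r : Rule LV LE) : Rule LV LE where
  L := r.R
  K := r.K
  R := r.L
  incL := r.incR
  incR := r.incL
  injL := r.injR
  injR := r.injL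

/-- The dangling condition: no edge of `G ∖ g(L)` is incident to a node of `g(L ∖ K)`. -/
def Dangling (g : Morphism r.L G) : Prop :=
  ∀ e : G.E, (∀ e' : r.L.E, g.fE e' ≠ e) →
    ∀ v : r.L.V, (∀ k : r.K.V, r.incL.fV k ≠ v) →
      G.s e ≠ g.fV v ∧ G.t e ≠ g.fV v

/-- The match `g` is applicable: it is injective and satisfies the dangling condition. -/
def Applicable (g : Morphism r.L G) : Prop := g.Injective ∧ r.Dangling G g

/-- the nodes `g(L ∖ K)` deleted by applying `r` via `g` -/
def DelV (g : Morphism r.L G) : Set G.V :=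
  {x | ∃ v : r.L.V, (∀ k : r.K.V, r.incL.fV k ≠ v) ∧ g.fV v = x}

/-- the edges `g(L ∖ K)` deleted by applying `r` via `g` -/
def DelE (g : Morphism r.L G) : Set G.E :=
  {x | ∃ e : r.L.E, (∀ k : r.K.E, r.incL.fE k ≠ e) ∧ g.fE e = x}

theorem kept_incL {g : Morphism r.L G} (hinj : g.Injective) (k : r.K.V) :
    g.fV (r.incL.fV k) ∉ r.DelV G g := by
  rintro ⟨v, hv, heq⟩
  exact hv k (hinj.1 heq).symm

theorem kept_src {g : Morphism r.L G} (h : r.Applicable G g) {e : G.E}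
    (he : e ∉ r.DelE G g) : G.s e ∉ r.DelV G g := by
  rintro ⟨v, hv, heq⟩
  by_cases hc : ∃ e', g.fE e' = e
  · obtain ⟨e', rfl⟩ := hc
    by_cases hk : ∃ k, r.incL.fE k = e'
    · obtain ⟨k, rfl⟩ := hk
      have h1 : g.fV (r.L.s (r.incL.fE k)) = G.s (g.fE (r.incL.fE k)) := g.src _
      have h2 : r.incL.fV (r.K.s k) = r.L.s (r.incL.fE k) := r.incL.src k
      have h3 : g.fV v = g.fV (r.incL.fV (r.K.s k)) := by rw [heq, h2, h1]
      exact hv _ (h.1.1 h3).symm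
    · exact he ⟨e', fun k hk' => hk ⟨k, hk'⟩, rfl⟩
  · exact (h.2 e (fun e' he' => hc ⟨e', he'⟩) v hv).1 heq.symm

theorem kept_tgt {g : Morphism r.L G} (h : r.Applicable G g) {e : G.E}
    (he : e ∉ r.DelE G g) : G.t e ∉ r.DelV G g := by
  rintro ⟨v, hv, heq⟩
  by_cases hc : ∃ e', g.fE e' = e
  · obtain ⟨e', rfl⟩ := hc
    by_cases hk : ∃ k, r.incL.fE k = e'
    · obtain ⟨k, rfl⟩ := hk
      have h1 : g.fV (r.L.t (r.incL.fE k)) = G.t (g.fE (r.incL.fE k)) := g.tgt _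
      have h2 : r.incL.fV (r.K.t k) = r.L.t (r.incL.fE k) := r.incL.tgt k
      have h3 : g.fV v = g.fV (r.incL.fV (r.K.t k)) := by rw [heq, h2, h1]
      exact hv _ (h.1.1 h3).symm
    · exact he ⟨e', fun k hk' => hk ⟨k, hk'⟩, rfl⟩
  · exact (h.2 e (fun e' he' => hc ⟨e', he'⟩) v hv).2 heq.symm

attribute [local instance] Classical.propDecidable

/-- The result graph of applying `r` to `G` via an applicable match `g`:
delete `g(L ∖ K)` (undefining labels/rootedness of images of interface nodes
where they are undefined in `K`), then add `R ∖ K` disjointly, relabelling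
(and re-rooting) the images of interface nodes according to `R`. -/
noncomputable def result (g : Morphism r.L G) (h : r.Applicable G g) : GTGraph LV LE where
  V := {x : G.V // x ∉ r.DelV G g} ⊕ {v : r.R.V // ∀ k, r.incR.fV k ≠ v}
  E := {x : G.E // x ∉ r.DelE G g} ⊕ {e : r.R.E // ∀ k, r.incR.fE k ≠ e}
  finV := by
    haveI := G.finV; haveI := r.R.finV
    infer_instance
  finE := by
    haveI := G.finE; haveI := r.R.finE
    infer_instance
  s := fun e =>
    match e with
    | Sum.inl x => Sum.inl ⟨G.s x.1, r.kept_src G h x.2⟩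
    | Sum.inr x =>
        if hk : ∃ k, r.incR.fV k = r.R.s x.1 then
          Sum.inl ⟨g.fV (r.incL.fV hk.choose), r.kept_incL G h.1 _⟩
        else Sum.inr ⟨r.R.s x.1, fun k hk' => hk ⟨k, hk'⟩⟩
  t := fun e =>
    match e with
    | Sum.inl x => Sum.inl ⟨G.t x.1, r.kept_tgt G h x.2⟩
    | Sum.inr x =>
        if hk : ∃ k, r.incR.fV k = r.R.t x.1 then
          Sum.inl ⟨g.fV (r.incL.fV hk.choose), r.kept_incL G h.1 _⟩
        else Sum.inr ⟨r.R.t x.1, fun k hk' => hk ⟨k, hk'⟩⟩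
  l := fun v =>
    match v with
    | Sum.inl x =>
        if hk : ∃ k : r.K.V, r.K.l k = none ∧ g.fV (r.incL.fV k) = x.1 then
          r.R.l (r.incR.fV hk.choose)
        else G.l x.1
    | Sum.inr v => r.R.l v.1
  m := fun e =>
    match e with
    | Sum.inl x => G.m x.1
    | Sum.inr x => r.R.m x.1
  p := fun v =>
    match v with
    | Sum.inl x =>
        if hk : ∃ k : r.K.V, r.K.p k = none ∧ g.fV (r.incL.fV k) = x.1 then
          r.R.p (r.incR.fV hk.choose)
        else G.p x.1
    | Sum.inr v => r.R.p v.1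

/-- Direct derivation `G ⇒_r M`: there is an applicable match `g` such that `M`
is isomorphic to the result of applying `r` to `G` via `g`. -/
def Deriv (r : Rule LV LE) (G M : GTGraph LV LE) : Prop :=
  ∃ (g : Morphism r.L G) (h : r.Applicable G g), Nonempty (Iso (r.result G g h) M)

end Rule

/-- `G ⇒_𝓡 H` for a set of rules. -/
def GTStep {LV LE : Type} (Rs : Set (Rule LV LE)) (G H : GTGraph LV LE) : Prop :=
  ∃ r ∈ Rs, r.Deriv G H

/-- `G ⇒*_𝓡 H`: the reflexive-transitive closure of `⇒_𝓡`, up to isomorphism. -/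
def GTDerivStar {LV LE : Type} (Rs : Set (Rule LV LE)) (G H : GTGraph LV LE) : Prop :=
  Relation.ReflTransGen (GTStep Rs) G H ∨ Nonempty (Iso G H)

/-!
For a direct derivation `G ⇒ H` via a match `g : L → G`, the edges of `G` at an interface node
`g k` that get deleted are exactly the images of the edges of `L ∖ K` at `k`, and the edges of
`H` at `g k` that get created are exactly the edges of `R ∖ K` at `k`. Hence
`deg_H (g k) + deg_L k = deg_G (g k) + deg_R k`, while every other node of `H` has its degree
from `G` or from `R`. Similarly, when `L` is totally rooted the roots of `G` inside `g(L)` are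
exactly the images of the roots of `L`, and interface nodes of `H` take their rootedness from
`R`, so `|roots H| + |roots L| = |roots G| + |roots R|`.
-/

theorem Nat.card_subtype_and_add_card_subtype_not_and {α : Type*} [Finite α]
    (P Q : α → Prop) :
    Nat.card {a // Q a ∧ P a} + Nat.card {a // ¬ Q a ∧ P a} = Nat.card {a // P a} := by
  classical
  rw [← Nat.card_sum]
  refine Nat.card_congr ((Equiv.sumCongr ?_ ?_).trans (Equiv.sumCompl fun a : {a // P a} => Q a))
  · exact ((Equiv.subtypeSubtypeEquivSubtypeInter P Q).trans
      (Equiv.subtypeEquivRight fun _ => and_comm)).symm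
  · exact ((Equiv.subtypeSubtypeEquivSubtypeInter P (¬ Q ·)).trans
      (Equiv.subtypeEquivRight fun _ => and_comm)).symm

theorem Nat.card_subtype_mem_image_and {α β : Type*} {f : α → β} (hf : f.Injective)
    (S : Set α) (P : β → Prop) :
    Nat.card {b // b ∈ f '' S ∧ P b} = Nat.card {a // a ∈ S ∧ P (f a)} := by
  refine (Nat.card_congr (Equiv.ofBijective (fun a => ⟨f a.1, ⟨a.1, a.2.1, rfl⟩, a.2.2⟩)
    ⟨fun a a' he => Subtype.ext (hf (congrArg Subtype.val he)), ?_⟩)).symm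
  rintro ⟨_, ⟨a, ha, rfl⟩, hP⟩
  exact ⟨⟨a, ha, hP⟩, rfl⟩

theorem Nat.card_subtype_mem_range_and {α β : Type*} {f : α → β} (hf : f.Injective)
    (P : β → Prop) :
    Nat.card {b // b ∈ Set.range f ∧ P b} = Nat.card {a // P (f a)} := by
  simpa using Nat.card_subtype_mem_image_and hf Set.univ P

namespace GTGraph

variable {LV LE : Type}

/-- Source for `b = true`, target for `b = false`; lets both ends of an edge be treated at once. -/
def endpoint (G : GTGraph LV LE) : Bool → G.E → G.V
  | true => G.s
  | false => G.t

theorem degree_eq_card_endpoint (G : GTGraph LV LE) (v : G.V) :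
    G.degree v =
      Nat.card {e // G.endpoint true e = v} + Nat.card {e // G.endpoint false e = v} :=
  rfl

end GTGraph

namespace Morphism

variable {LV LE : Type} {G H : GTGraph LV LE}

theorem map_endpoint (f : Morphism G H) (b : Bool) (e : G.E) :
    f.fV (G.endpoint b e) = H.endpoint b (f.fE e) := by
  cases b
  exacts [f.tgt e, f.src e]

theorem card_mem_image_endpoint {f : Morphism G H} (hf : f.Injective) (S : Set G.E) (b : Bool)
    (v : G.V) :
    Nat.card {e // e ∈ f.fE '' S ∧ H.endpoint b e = f.fV v} =
      Nat.card {e // e ∈ S ∧ G.endpoint b e = v} := by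
  rw [Nat.card_subtype_mem_image_and hf.2]
  simp_rw [← f.map_endpoint, hf.1.eq_iff]

theorem card_mem_range_endpoint {f : Morphism G H} (hf : f.Injective) (b : Bool) (v : G.V) :
    Nat.card {e // e ∈ Set.range f.fE ∧ H.endpoint b e = f.fV v} =
      Nat.card {e // G.endpoint b e = v} := by
  rw [Nat.card_subtype_mem_range_and hf.2]
  simp_rw [← f.map_endpoint, hf.1.eq_iff]

theorem rootedness_eq_some_iff (f : Morphism G H) (hG : G.IsTotallyRooted) (v : G.V) (b : Bool) :
    H.p (f.fV v) = some b ↔ G.p v = some b := by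
  obtain ⟨b', hb'⟩ := Option.isSome_iff_exists.mp (hG v)
  rw [f.rootedness v b' hb', hb']

end Morphism

namespace Iso

variable {LV LE : Type} {G H : GTGraph LV LE}

def equivV (i : Iso G H) : G.V ≃ H.V := ⟨i.toMor.fV, i.invMor.fV, i.leftV, i.rightV⟩

def equivE (i : Iso G H) : G.E ≃ H.E := ⟨i.toMor.fE, i.invMor.fE, i.leftE, i.rightE⟩

theorem degree_toMor (i : Iso G H) (v : G.V) : H.degree (i.toMor.fV v) = G.degree v := by
  have hend (b : Bool) :
      Nat.card {e // H.endpoint b e = i.toMor.fV v} = Nat.card {e // G.endpoint b e = v} :=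
    (Nat.card_congr (i.equivE.subtypeEquiv fun e => by
      change _ ↔ H.endpoint b (i.toMor.fE e) = i.toMor.fV v
      rw [← i.toMor.map_endpoint, (show Function.Injective i.toMor.fV from
        i.equivV.injective).eq_iff])).symm
  rw [GTGraph.degree_eq_card_endpoint, GTGraph.degree_eq_card_endpoint, hend, hend]

theorem rootCount_eq (i : Iso G H) : H.rootCount = G.rootCount :=
  (Nat.card_congr (i.equivV.subtypeEquiv fun v =>
    ⟨i.toMor.rootedness v true, fun hv => i.leftV v ▸ i.invMor.rootedness _ true hv⟩)).symm

end Iso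

namespace Rule

variable {LV LE : Type} {r : Rule LV LE} {G : GTGraph LV LE} {g : Morphism r.L G}

attribute [local instance] Classical.propDecidable

theorem DelE_eq : r.DelE G g = g.fE '' (Set.range r.incL.fE)ᶜ := by
  ext e
  simp [DelE, eq_comm]

theorem DelV_subset_range : r.DelV G g ⊆ Set.range g.fV :=
  fun _ ⟨v, _, hv⟩ => ⟨v, hv⟩

theorem exists_interface_of_mem_range {x : G.V} (hx : x ∉ r.DelV G g)
    (hr : x ∈ Set.range g.fV) : ∃ k, g.fV (r.incL.fV k) = x := by
  obtain ⟨v, rfl⟩ := hr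
  by_contra hk
  exact hx ⟨v, fun k hkv => hk ⟨k, hkv ▸ rfl⟩, rfl⟩

theorem endpoint_notMem_DelV (h : r.Applicable G g) {e : G.E} (he : e ∉ r.DelE G g)
    (b : Bool) : G.endpoint b e ∉ r.DelV G g := by
  cases b
  exacts [r.kept_tgt G h he, r.kept_src G h he]

/- The nodes and edges of the result graph are named through these maps rather than through
`Sum.inl`/`Sum.inr`, whose type is not syntactically `(r.result G g h).V`; otherwise `rw` and
`simp` fail to match terms such as `(r.result G g h).degree (Sum.inl x)`. -/

noncomputable def keptV (h : r.Applicable G g) (x : G.V) (hx : x ∉ r.DelV G g) :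
    (r.result G g h).V :=
  Sum.inl ⟨x, hx⟩

noncomputable def addedV (h : r.Applicable G g) (v : r.R.V) (hv : ∀ k, r.incR.fV k ≠ v) :
    (r.result G g h).V :=
  Sum.inr ⟨v, hv⟩

noncomputable def keptE (h : r.Applicable G g) (e : G.E) (he : e ∉ r.DelE G g) :
    (r.result G g h).E :=
  Sum.inl ⟨e, he⟩

noncomputable def addedE (h : r.Applicable G g) (e : r.R.E) (he : ∀ k, r.incR.fE k ≠ e) :
    (r.result G g h).E :=
  Sum.inr ⟨e, he⟩

theorem keptV_inj (h : r.Applicable G g) {x y : G.V} {hx : x ∉ r.DelV G g}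
    {hy : y ∉ r.DelV G g} : keptV h x hx = keptV h y hy ↔ x = y :=
  ⟨fun he => congrArg Subtype.val (Sum.inl.inj he), fun he => by subst he; rfl⟩

theorem addedV_inj (h : r.Applicable G g) {v w : r.R.V} {hv : ∀ k, r.incR.fV k ≠ v}
    {hw : ∀ k, r.incR.fV k ≠ w} : addedV h v hv = addedV h w hw ↔ v = w :=
  ⟨fun he => congrArg Subtype.val (Sum.inr.inj he), fun he => by subst he; rfl⟩

theorem keptV_ne_addedV (h : r.Applicable G g) {x : G.V} {hx : x ∉ r.DelV G g} {v : r.R.V}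
    {hv : ∀ k, r.incR.fV k ≠ v} : keptV h x hx ≠ addedV h v hv :=
  Sum.inl_ne_inr

theorem card_result_vertices (h : r.Applicable G g) (P : (r.result G g h).V → Prop) :
    Nat.card {w // P w} =
      Nat.card {x : {x // x ∉ r.DelV G g} // P (keptV h x.1 x.2)} +
        Nat.card {v : {v : r.R.V // ∀ k, r.incR.fV k ≠ v} // P (addedV h v.1 v.2)} := by
  have := G.finV; have := r.R.finV
  exact (Nat.card_congr Equiv.subtypeSum).trans (Nat.card_sum ..)

theorem card_result_edges (h : r.Applicable G g) (P : (r.result G g h).E → Prop) :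
    Nat.card {e // P e} =
      Nat.card {e : {e // e ∉ r.DelE G g} // P (keptE h e.1 e.2)} +
        Nat.card {e : {e : r.R.E // ∀ k, r.incR.fE k ≠ e} // P (addedE h e.1 e.2)} := by
  have := G.finE; have := r.R.finE
  exact (Nat.card_congr Equiv.subtypeSum).trans (Nat.card_sum ..)

noncomputable def comatchV (h : r.Applicable G g) (w : r.R.V) : (r.result G g h).V :=
  if hk : ∃ k, r.incR.fV k = w then keptV h (g.fV (r.incL.fV hk.choose)) (r.kept_incL G h.1 _)
  else addedV h w fun k hkw => hk ⟨k, hkw⟩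

theorem comatchV_incR (h : r.Applicable G g) (k : r.K.V) :
    comatchV h (r.incR.fV k) = keptV h (g.fV (r.incL.fV k)) (r.kept_incL G h.1 k) := by
  have hk : ∃ k', r.incR.fV k' = r.incR.fV k := ⟨k, rfl⟩
  rw [comatchV, dif_pos hk, keptV_inj, r.injR.1 hk.choose_spec]

theorem comatchV_of_forall_ne (h : r.Applicable G g) {w : r.R.V}
    (hw : ∀ k, r.incR.fV k ≠ w) : comatchV h w = addedV h w hw :=
  dif_neg fun ⟨k, hk⟩ => hw k hk

theorem comatchV_injective (h : r.Applicable G g) : Function.Injective (comatchV h) := by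
  intro w w' he
  by_cases hw : ∃ k, r.incR.fV k = w <;> by_cases hw' : ∃ k, r.incR.fV k = w'
  · obtain ⟨k, rfl⟩ := hw
    obtain ⟨k', rfl⟩ := hw'
    rw [comatchV_incR, comatchV_incR, keptV_inj] at he
    rw [r.injL.1 (h.1.1 he)]
  · push Not at hw'
    obtain ⟨k, rfl⟩ := hw
    rw [comatchV_incR, comatchV_of_forall_ne h hw'] at he
    exact absurd he (keptV_ne_addedV h)
  · push Not at hw
    obtain ⟨k', rfl⟩ := hw'
    rw [comatchV_incR, comatchV_of_forall_ne h hw] at he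
    exact absurd he.symm (keptV_ne_addedV h)
  · push Not at hw hw'
    rwa [comatchV_of_forall_ne h hw, comatchV_of_forall_ne h hw', addedV_inj] at he

theorem comatchV_ne_keptV (h : r.Applicable G g) {x : G.V} (hx : x ∉ r.DelV G g)
    (hr : x ∉ Set.range g.fV) (w : r.R.V) : comatchV h w ≠ keptV h x hx := by
  by_cases hw : ∃ k, r.incR.fV k = w
  · obtain ⟨k, rfl⟩ := hw
    rw [comatchV_incR, ne_eq, keptV_inj]
    exact fun hk => hr ⟨_, hk⟩
  · push Not at hw
    rw [comatchV_of_forall_ne h hw]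
    exact (keptV_ne_addedV h).symm

theorem result_endpoint_keptE (h : r.Applicable G g) (b : Bool) (e : G.E)
    (he : e ∉ r.DelE G g) :
    (r.result G g h).endpoint b (keptE h e he) =
      keptV h (G.endpoint b e) (endpoint_notMem_DelV h he b) := by
  cases b <;> rfl

theorem result_endpoint_addedE (h : r.Applicable G g) (b : Bool) (e : r.R.E)
    (he : ∀ k, r.incR.fE k ≠ e) :
    (r.result G g h).endpoint b (addedE h e he) = comatchV h (r.R.endpoint b e) := by
  cases b <;> rfl

theorem card_result_endpoint_keptV (h : r.Applicable G g) (b : Bool) {x : G.V}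
    (hx : x ∉ r.DelV G g) :
    Nat.card {e // (r.result G g h).endpoint b e = keptV h x hx} =
      Nat.card {e // e ∉ r.DelE G g ∧ G.endpoint b e = x} +
        Nat.card {e // e ∉ Set.range r.incR.fE ∧
          comatchV h (r.R.endpoint b e) = keptV h x hx} := by
  rw [card_result_edges h]
  simp only [result_endpoint_keptE, result_endpoint_addedE, keptV_inj]
  congr 1
  · exact Nat.card_congr (Equiv.subtypeSubtypeEquivSubtypeInter _ (G.endpoint b · = x))
  · refine Nat.card_congr ((Equiv.subtypeSubtypeEquivSubtypeInter _
      (fun e => comatchV h (r.R.endpoint b e) = keptV h x hx)).trans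
      (Equiv.subtypeEquivRight fun e => ?_))
    simp

theorem card_result_endpoint_addedV (h : r.Applicable G g) (b : Bool) {v : r.R.V}
    (hv : ∀ k, r.incR.fV k ≠ v) :
    Nat.card {e // (r.result G g h).endpoint b e = addedV h v hv} =
      Nat.card {e // r.R.endpoint b e = v} := by
  rw [card_result_edges h, Nat.card_eq_zero.2 (Or.inl ⟨fun e => keptV_ne_addedV h
    ((result_endpoint_keptE h b _ _).symm.trans e.2)⟩), zero_add]
  simp only [result_endpoint_addedE, ← comatchV_of_forall_ne h hv, (comatchV_injective h).eq_iff]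
  exact Nat.card_congr (Equiv.subtypeSubtypeEquivSubtype (p := fun e => ∀ k, r.incR.fE k ≠ e)
    (q := (r.R.endpoint b · = v)) fun he k hk => hv _ (by rw [r.incR.map_endpoint, hk, he]))

theorem card_mem_DelE_endpoint_interface (h : r.Applicable G g) (b : Bool) (k : r.K.V) :
    Nat.card {e // e ∈ r.DelE G g ∧ G.endpoint b e = g.fV (r.incL.fV k)} =
      Nat.card {e // e ∉ Set.range r.incL.fE ∧ r.L.endpoint b e = r.incL.fV k} := by
  rw [DelE_eq]
  exact Morphism.card_mem_image_endpoint h.1 _ b _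

theorem card_mem_DelE_endpoint_of_notMem_range (b : Bool) {x : G.V}
    (hr : x ∉ Set.range g.fV) : Nat.card {e // e ∈ r.DelE G g ∧ G.endpoint b e = x} = 0 :=
  Nat.card_eq_zero.2 (Or.inl ⟨fun ⟨_, ⟨a, _, ha⟩, he⟩ =>
    hr ⟨_, (g.map_endpoint b a).trans (ha ▸ he)⟩⟩)

theorem card_result_endpoint_interface_add (h : r.Applicable G g) (b : Bool) (k : r.K.V)
    (hx : g.fV (r.incL.fV k) ∉ r.DelV G g) :
    Nat.card {e // (r.result G g h).endpoint b e = keptV h (g.fV (r.incL.fV k)) hx} +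
        Nat.card {e // r.L.endpoint b e = r.incL.fV k} =
      Nat.card {e // G.endpoint b e = g.fV (r.incL.fV k)} +
        Nat.card {e // r.R.endpoint b e = r.incR.fV k} := by
  have := G.finE; have := r.L.finE; have := r.R.finE
  have hH := card_result_endpoint_keptV h b hx
  have hcomatch (w : r.R.V) :
      comatchV h w = keptV h (g.fV (r.incL.fV k)) hx ↔ w = r.incR.fV k := by
    rw [← comatchV_incR h k, (comatchV_injective h).eq_iff]
  simp_rw [hcomatch] at hH
  have hG := Nat.card_subtype_and_add_card_subtype_not_and
    (G.endpoint b · = g.fV (r.incL.fV k)) (· ∈ r.DelE G g)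
  have hL := Nat.card_subtype_and_add_card_subtype_not_and
    (r.L.endpoint b · = r.incL.fV k) (· ∈ Set.range r.incL.fE)
  have hR := Nat.card_subtype_and_add_card_subtype_not_and
    (r.R.endpoint b · = r.incR.fV k) (· ∈ Set.range r.incR.fE)
  rw [card_mem_DelE_endpoint_interface h] at hG
  rw [r.incL.card_mem_range_endpoint r.injL] at hL
  rw [r.incR.card_mem_range_endpoint r.injR] at hR
  omega

theorem degree_result_interface (h : r.Applicable G g) (k : r.K.V)
    (hx : g.fV (r.incL.fV k) ∉ r.DelV G g) :
    (r.result G g h).degree (keptV h (g.fV (r.incL.fV k)) hx) + r.L.degree (r.incL.fV k) =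
      G.degree (g.fV (r.incL.fV k)) + r.R.degree (r.incR.fV k) := by
  have := card_result_endpoint_interface_add h true k hx
  have := card_result_endpoint_interface_add h false k hx
  simp only [GTGraph.degree_eq_card_endpoint]
  omega

theorem degree_result_of_notMem_range (h : r.Applicable G g) {x : G.V} (hx : x ∉ r.DelV G g)
    (hr : x ∉ Set.range g.fV) : (r.result G g h).degree (keptV h x hx) = G.degree x := by
  have := G.finE
  have hend (b : Bool) : Nat.card {e // (r.result G g h).endpoint b e = keptV h x hx} =
      Nat.card {e // G.endpoint b e = x} := by
    have hadded : Nat.card {e // e ∉ Set.range r.incR.fE ∧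
        comatchV h (r.R.endpoint b e) = keptV h x hx} = 0 :=
      Nat.card_eq_zero.2 (Or.inl ⟨fun e => comatchV_ne_keptV h hx hr _ e.2.2⟩)
    rw [card_result_endpoint_keptV, hadded, add_zero,
      ← Nat.card_subtype_and_add_card_subtype_not_and
        (G.endpoint b · = x) (· ∈ r.DelE G g),
      card_mem_DelE_endpoint_of_notMem_range b hr, zero_add]
  rw [GTGraph.degree_eq_card_endpoint, GTGraph.degree_eq_card_endpoint, hend, hend]

theorem degree_result_addedV (h : r.Applicable G g) {v : r.R.V} (hv : ∀ k, r.incR.fV k ≠ v) :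
    (r.result G g h).degree (addedV h v hv) = r.R.degree v := by
  rw [GTGraph.degree_eq_card_endpoint, card_result_endpoint_addedV, card_result_endpoint_addedV]
  rfl

theorem degree_result_le (h : r.Applicable G g) {N : ℕ} (hG : ∀ x, G.degree x ≤ N)
    (hnew : ∀ v : r.R.V, (∀ k, r.incR.fV k ≠ v) → r.R.degree v ≤ N)
    (hint : ∀ k, r.R.degree (r.incR.fV k) ≤ r.L.degree (r.incL.fV k))
    (w : (r.result G g h).V) : (r.result G g h).degree w ≤ N := by
  rcases w with ⟨x, hx⟩ | ⟨v, hv⟩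
  · change (r.result G g h).degree (keptV h x hx) ≤ N
    by_cases hr : x ∈ Set.range g.fV
    · obtain ⟨k, rfl⟩ := exists_interface_of_mem_range hx hr
      have := degree_result_interface h k hx
      have := hint k
      have := hG (g.fV (r.incL.fV k))
      omega
    · exact degree_result_of_notMem_range h hx hr ▸ hG x
  · change (r.result G g h).degree (addedV h v hv) ≤ N
    exact degree_result_addedV h hv ▸ hnew v hv

theorem result_p_keptV_interface (h : r.Applicable G g) (k : r.K.V)
    (hx : g.fV (r.incL.fV k) ∉ r.DelV G g) :
    (r.result G g h).p (keptV h _ hx) = r.R.p (r.incR.fV k) := by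
  show (if hk : ∃ k', r.K.p k' = none ∧ g.fV (r.incL.fV k') = g.fV (r.incL.fV k) then
    r.R.p (r.incR.fV hk.choose) else G.p (g.fV (r.incL.fV k))) = _
  by_cases hk : ∃ k', r.K.p k' = none ∧ g.fV (r.incL.fV k') = g.fV (r.incL.fV k)
  · rw [dif_pos hk, r.injL.1 (h.1.1 hk.choose_spec.2)]
  · rw [dif_neg hk]
    -- `k` is rooted or unrooted already in `K`, and both `G` and `R` inherit that.
    cases hb : r.K.p k with
    | none => exact absurd ⟨k, hb, rfl⟩ hk
    | some b =>
      rw [r.incR.rootedness k b hb]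
      exact g.rootedness _ b (r.incL.rootedness k b hb)

theorem result_p_keptV_of_notMem_range (h : r.Applicable G g) {x : G.V}
    (hx : x ∉ r.DelV G g) (hr : x ∉ Set.range g.fV) :
    (r.result G g h).p (keptV h x hx) = G.p x :=
  dif_neg fun ⟨_, _, hk⟩ => hr ⟨_, hk⟩

theorem card_result_roots_keptV (h : r.Applicable G g) :
    Nat.card {x : {x // x ∉ r.DelV G g} //
        (r.result G g h).p (keptV h x.1 x.2) = some true} =
      Nat.card {k // r.R.p (r.incR.fV k) = some true} +
        Nat.card {x // x ∉ Set.range g.fV ∧ G.p x = some true} := by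
  have := G.finV
  let ι : r.K.V → {x // x ∉ r.DelV G g} := fun k => ⟨g.fV (r.incL.fV k), r.kept_incL G h.1 k⟩
  have hι : ι.Injective := fun k k' he => r.injL.1 (h.1.1 (congrArg Subtype.val he))
  have hrange (x : {x // x ∉ r.DelV G g}) : x ∈ Set.range ι ↔ x.1 ∈ Set.range g.fV :=
    ⟨fun ⟨k, hk⟩ => ⟨_, congrArg Subtype.val hk⟩, fun hr =>
      let ⟨k, hk⟩ := exists_interface_of_mem_range x.2 hr; ⟨k, Subtype.ext hk⟩⟩
  rw [← Nat.card_subtype_and_add_card_subtype_not_and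
    (fun x => (r.result G g h).p (keptV h x.1 x.2) = some true) (· ∈ Set.range ι),
    Nat.card_subtype_mem_range_and hι]
  congr 1
  · simp only [ι, result_p_keptV_interface]
  · refine Nat.card_congr ((Equiv.subtypeEquivRight fun x => ?_).trans
      (Equiv.subtypeSubtypeEquivSubtype (p := (· ∉ r.DelV G g))
        (q := fun x => x ∉ Set.range g.fV ∧ G.p x = some true)
        fun hx hD => hx.1 (DelV_subset_range hD)))
    rw [hrange]
    exact and_congr_right fun hr => by rw [result_p_keptV_of_notMem_range h x.2 hr]

theorem rootCount_result_add (h : r.Applicable G g) (hL : r.L.IsTotallyRooted) :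
    (r.result G g h).rootCount + r.L.rootCount = G.rootCount + r.R.rootCount := by
  have := G.finV; have := r.R.finV
  have hH := card_result_vertices h ((r.result G g h).p · = some true)
  rw [card_result_roots_keptV h] at hH
  have hadded : Nat.card {v : {v : r.R.V // ∀ k, r.incR.fV k ≠ v} //
      (r.result G g h).p (addedV h v.1 v.2) = some true} =
      Nat.card {v // v ∉ Set.range r.incR.fV ∧ r.R.p v = some true} :=
    Nat.card_congr ((Equiv.subtypeSubtypeEquivSubtypeInter _ (r.R.p · = some true)).trans
      (Equiv.subtypeEquivRight fun v => by simp))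
  have hG := Nat.card_subtype_and_add_card_subtype_not_and
    (G.p · = some true) (· ∈ Set.range g.fV)
  rw [Nat.card_subtype_mem_range_and h.1.1] at hG
  simp_rw [g.rootedness_eq_some_iff hL] at hG
  have hR := Nat.card_subtype_and_add_card_subtype_not_and
    (r.R.p · = some true) (· ∈ Set.range r.incR.fV)
  rw [Nat.card_subtype_mem_range_and r.injR.1] at hR
  unfold GTGraph.rootCount
  omega

end Rule

theorem bounded_preserving_general {LV LE : Type} (N M : ℕ) (Rs : Set (Rule LV LE))
    (hrules : ∀ r ∈ Rs, r.L.IsTLRG ∧ r.R.IsTLRG)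
    (hdeg : ∀ r ∈ Rs,
      (∀ v : r.R.V, (∀ k, r.incR.fV k ≠ v) → r.R.degree v ≤ N) ∧
      (∀ k : r.K.V, r.R.degree (r.incR.fV k) ≤ r.L.degree (r.incL.fV k)))
    (hroot : ∀ r ∈ Rs, r.R.rootCount ≤ r.L.rootCount)
    (G H : GTGraph LV LE)
    (hstep : GTStep Rs G H) :
    ((∀ v, G.degree v ≤ N) → ∀ v, H.degree v ≤ N) ∧
    (G.rootCount ≤ M → H.rootCount ≤ M) := by
  obtain ⟨r, hr, g, h, ⟨i⟩⟩ := hstep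
  refine ⟨fun hG v => ?_, fun hG => ?_⟩
  · rw [← i.rightV v, i.degree_toMor]
    exact Rule.degree_result_le h hG (hdeg r hr).1 (hdeg r hr).2 _
  · have hcount := Rule.rootCount_result_add h (hrules r hr).1.2
    have hrule := hroot r hr
    rw [i.rootCount_eq]
    omega

/-- **Bounded degree / bounded roots preservation**: if every rule of `𝓡` is
bounded degree preserving (for the bound `N`) and bounded roots preserving,
then every direct derivation preserves "all degrees ≤ N" and "at most `M`
root nodes". -/
theorem bounded_preserving {LV LE : Type} (N M : ℕ) (Rs : Set (Rule LV LE))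
    (hrules : ∀ r ∈ Rs, r.L.IsTLRG ∧ r.R.IsTLRG)
    (hdeg : ∀ r ∈ Rs,
      (∀ v : r.R.V, (∀ k, r.incR.fV k ≠ v) → r.R.degree v ≤ N) ∧
      (∀ k : r.K.V, r.R.degree (r.incR.fV k) ≤ r.L.degree (r.incL.fV k)))
    (hroot : ∀ r ∈ Rs, r.R.rootCount ≤ r.L.rootCount)
    (G H : GTGraph LV LE) (hG : G.IsTLRG) (hH : H.IsTLRG)
    (hstep : GTStep Rs G H) :
    ((∀ v, G.degree v ≤ N) → ∀ v, H.degree v ≤ N) ∧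
    (G.rootCount ≤ M → H.rootCount ≤ M) :=
  bounded_preserving_general N M Rs hrules hdeg hroot G H hstep
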